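/- arXiv:1301.2704 — 5 statements merged into one kernel-verified Lean document; each statement's English description precedes it below -/
import Mathlib

section
/- The linear map Δ = ∂_t + θ∂_θ on the superalgebra A = ℂ[t,t⁻¹] ⊕ θℂ[t,t⁻¹] is an even σ-derivation, i.e., Δ(ab) = Δ(a)b + σ(a)Δ(b) for all homogeneous a, b ∈ A, where σ(tⁿ) = qⁿtⁿ and σ(θ) = qθ. -/
noncomputable section

/-- The q-number `{n} = (1-q^n)/(1-q)`. -/
def qnum (q : ℂ) (n : ℤ) : ℂ := (1 - q ^ n) / (1 - q)

/-- The superalgebra `A = A₀ ⊕ A₁` with `A₀ = ℂ[t,t⁻¹]` and `A₁ = θ·ℂ[t,t⁻¹]`, `θ² = 0`.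
An element is a pair `(even part, odd part)`, each a Laurent-polynomial-like finitely
supported family of coefficients of `tⁿ` (resp. `θtⁿ`). -/
abbrev Aq : Type := AddMonoidAlgebra ℂ ℤ × AddMonoidAlgebra ℂ ℤ

/-- The (super-commutative) multiplication of `A`: `tⁿ·tᵐ = t^{n+m}`,
`tⁿ·θtᵐ = θtⁿ·tᵐ = θt^{n+m}`, `θtⁿ·θtᵐ = 0`. -/
def mulA (x y : Aq) : Aq := (x.1 * y.1, x.1 * y.2 + x.2 * y.1)

/-- Rescale each coefficient of exponent `n` by `c n`. -/
def scaleA (c : ℤ → ℂ) (x : AddMonoidAlgebra ℂ ℤ) : AddMonoidAlgebra ℂ ℤ :=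
  AddMonoidAlgebra.ofCoeff (x.coeff.sum fun n a => Finsupp.single n (c n * a))

/-- The algebra endomorphism `σ`: `σ(tⁿ) = qⁿtⁿ`, `σ(θtⁿ) = q^{n+1}θtⁿ`
(from `σ(θ) = qθ`). -/
def sigmaA (q : ℂ) (x : Aq) : Aq :=
  (scaleA (fun n => q ^ n) x.1, scaleA (fun n => q ^ (n + 1)) x.2)

/-- `∂_t`: `∂_t(tⁿ) = {n}tⁿ`, `∂_t(θtⁿ) = {n}θtⁿ`. -/
def delT (q : ℂ) (x : Aq) : Aq := (scaleA (qnum q) x.1, scaleA (qnum q) x.2)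

/-- `∂_θ`: `∂_θ(tⁿ) = 0`, `∂_θ(θtⁿ) = qⁿtⁿ`. -/
def delTheta (q : ℂ) (x : Aq) : Aq := (scaleA (fun n => q ^ n) x.2, 0)

/-- Multiplication by `θ` on the left. -/
def thetaMul (x : Aq) : Aq := (0, x.1)

/-- `Δ = ∂_t + θ∂_θ`. -/
def DeltaA (q : ℂ) (x : Aq) : Aq := delT q x + thetaMul (delTheta q x)

/-- An element of `A` is homogeneous if it lies in `A₀` or in `A₁`. -/
def homogA (a : Aq) : Prop := a.2 = 0 ∨ a.1 = 0

lemma scaleA_single (c : ℤ → ℂ) (n : ℤ) (a : ℂ) :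
    scaleA c (AddMonoidAlgebra.single n a) = AddMonoidAlgebra.single n (c n * a) := by
  unfold scaleA
  rw [AddMonoidAlgebra.coeff_single, Finsupp.sum_single_index]
  · rfl
  · simp

lemma scaleA_zero (c : ℤ → ℂ) : scaleA c 0 = 0 := by simp [scaleA]

lemma scaleA_add (c : ℤ → ℂ) (x y : AddMonoidAlgebra ℂ ℤ) :
    scaleA c (x + y) = scaleA c x + scaleA c y := by
  unfold scaleA
  rw [AddMonoidAlgebra.coeff_add, Finsupp.sum_add_index', AddMonoidAlgebra.ofCoeff_add] <;> intros <;> simp [mul_add, Finsupp.single_add]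

lemma scaleA_one (x : AddMonoidAlgebra ℂ ℤ) : scaleA (fun _ => (1:ℂ)) x = x := by
  induction x using AddMonoidAlgebra.induction_linear with
  | zero => simp [scaleA_zero]
  | add f g hf hg => rw [scaleA_add, hf, hg]
  | single n a => rw [scaleA_single, one_mul]

lemma scaleA_zero_fun (x : AddMonoidAlgebra ℂ ℤ) : scaleA (fun _ => (0:ℂ)) x = 0 := by
  induction x using AddMonoidAlgebra.induction_linear with
  | zero => simp [scaleA_zero]
  | add f g hf hg => rw [scaleA_add, hf, hg, add_zero]
  | single n a => rw [scaleA_single, zero_mul, AddMonoidAlgebra.single_zero]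

lemma scaleA_fun_add (c d : ℤ → ℂ) (x : AddMonoidAlgebra ℂ ℤ) :
    scaleA (fun n => c n + d n) x = scaleA c x + scaleA d x := by
  induction x using AddMonoidAlgebra.induction_linear with
  | zero => simp [scaleA_zero]
  | add f g hf hg =>
      rw [scaleA_add, scaleA_add, scaleA_add, hf, hg]; ring
  | single n a =>
      rw [scaleA_single, scaleA_single, scaleA_single, ← AddMonoidAlgebra.single_add]
      ring_nf

lemma key3 (c d1 e1 d2 e2 d3 e3 : ℤ → ℂ)
    (h : ∀ n m, c (n + m) = d1 n * e1 m + d2 n * e2 m + d3 n * e3 m)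
    (x y : AddMonoidAlgebra ℂ ℤ) :
    scaleA c (x * y) = scaleA d1 x * scaleA e1 y + scaleA d2 x * scaleA e2 y
      + scaleA d3 x * scaleA e3 y := by
  induction x using AddMonoidAlgebra.induction_linear with
  | zero => simp [scaleA_zero]
  | add f g hf hg =>
      rw [add_mul, scaleA_add, hf, hg, scaleA_add, scaleA_add, scaleA_add]; ring
  | single n a =>
      induction y using AddMonoidAlgebra.induction_linear with
      | zero => simp [scaleA_zero]
      | add f g hf hg =>
          rw [mul_add, scaleA_add, hf, hg, scaleA_add, scaleA_add, scaleA_add]; ring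
      | single m b =>
          simp only [AddMonoidAlgebra.single_mul_single, scaleA_single]
          rw [← AddMonoidAlgebra.single_add, ← AddMonoidAlgebra.single_add, h]
          exact congrArg (AddMonoidAlgebra.single (n + m)) (by ring)

/-- The map `Δ = ∂_t + θ∂_θ` is an even `σ`-derivation:
`Δ(ab) = Δ(a)b + σ(a)Δ(b)` for all homogeneous `a, b ∈ A`
(the sign `(-1)^{i|a|}` is `1` since `Δ` is even, `i = 0`). -/
theorem Delta_is_even_sigma_derivation (q : ℂ) (hq0 : q ≠ 0) (hq1 : q ≠ 1)
    (a b : Aq) (ha : homogA a) (hb : homogA b) :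
    DeltaA q (mulA a b) = mulA (DeltaA q a) b + mulA (sigmaA q a) (DeltaA q b) := by
  have hq1' : (1 : ℂ) - q ≠ 0 := sub_ne_zero.mpr (Ne.symm hq1)
  -- scalar identities
  have hA : ∀ n m : ℤ, qnum q (n + m) =
      qnum q n * 1 + q ^ n * qnum q m + 0 * 0 := by
    intro n m
    unfold qnum
    rw [zpow_add₀ hq0]
    field_simp
    ring
  have hB : ∀ n m : ℤ, (fun k => qnum q k + q ^ k) (n + m) =
      qnum q n * 1 + q ^ n * qnum q m + q ^ n * q ^ m := by
    intro n m
    simp only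
    unfold qnum
    rw [zpow_add₀ hq0]
    field_simp
    ring
  have hC : ∀ n m : ℤ, (fun k => qnum q k + q ^ k) (n + m) =
      qnum q n * 1 + q ^ n * 1 + q ^ (n + 1) * qnum q m := by
    intro n m
    simp only
    unfold qnum
    rw [zpow_add₀ hq0, zpow_add₀ hq0 n 1, zpow_one]
    field_simp
    ring
  have e0 := key3 (qnum q) (qnum q) (fun _ => 1) (fun k => q ^ k) (qnum q)
      (fun _ => 0) (fun _ => 0) hA a.1 b.1
  have e1 := key3 (fun k => qnum q k + q ^ k) (qnum q) (fun _ => 1)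
      (fun k => q ^ k) (qnum q) (fun k => q ^ k) (fun k => q ^ k) hB a.1 b.2
  have e2 := key3 (fun k => qnum q k + q ^ k) (qnum q) (fun _ => 1)
      (fun k => q ^ k) (fun _ => 1) (fun k => q ^ (k + 1)) (qnum q) hC a.2 b.1
  rw [scaleA_one] at e0 e1 e2
  rw [scaleA_zero_fun, zero_mul, add_zero] at e0
  have f1 := scaleA_fun_add (qnum q) (fun k => q ^ k) (a.1 * b.2)
  have f2 := scaleA_fun_add (qnum q) (fun k => q ^ k) (a.2 * b.1)
  apply Prod.ext
  · show scaleA (qnum q) (a.1 * b.1) + 0 =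
      (scaleA (qnum q) a.1 + 0) * b.1 +
        scaleA (fun k => q ^ k) a.1 * (scaleA (qnum q) b.1 + 0)
    rw [add_zero, add_zero, add_zero, e0]
  · show scaleA (qnum q) (a.1 * b.2 + a.2 * b.1) +
        scaleA (fun k => q ^ k) (a.1 * b.2 + a.2 * b.1) =
      ((scaleA (qnum q) a.1 + 0) * b.2 +
        (scaleA (qnum q) a.2 + scaleA (fun k => q ^ k) a.2) * b.1) +
      (scaleA (fun k => q ^ k) a.1 *
        (scaleA (qnum q) b.2 + scaleA (fun k => q ^ k) b.2) +
       scaleA (fun k => q ^ (k + 1)) a.2 * (scaleA (qnum q) b.1 + 0))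
    rw [scaleA_add, scaleA_add]
    linear_combination e1 + e2 - f1 - f2

end
end

section
/- The triple (W^q, [·,·], α) is a Hom-Lie superalgebra: the bracket is super skew-symmetric and satisfies the super Hom-Jacobi identity (-1)^{|x||z|}[α(x),[y,z]] + (-1)^{|z||y|}[α(z),[x,y]] + (-1)^{|y||x|}[α(y),[z,x]] = 0 for homogeneous x, y, z. -/
noncomputable section

/-- The underlying superspace of the q-deformed Witt superalgebra `W^q`:
finitely supported families over the basis indexed by `Bool × ℤ`, where
`(false, n)` corresponds to the even generator `L_n` and `(true, n)` to the
odd generator `G_n`. -/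
abbrev Wq : Type := (Bool × ℤ) →₀ ℂ

/-- The basis vector with index `i` (i.e. `L_n` or `G_n`). -/
def e (i : Bool × ℤ) : Wq := Finsupp.single i 1

/-- The sign `(-1)^{ab}` for parities `a, b ∈ ℤ₂` (as a complex number). -/
def sg (a b : Bool) : ℂ := if a && b then -1 else 1

/-- The bracket on basis elements: `[L_n,L_m] = ({m}-{n})L_{n+m}`,
`[L_n,G_m] = ({m+1}-{n})G_{n+m}`, `[G_n,L_m] = -[L_m,G_n]`, `[G_n,G_m] = 0`. -/
def bb (q : ℂ) : Bool × ℤ → Bool × ℤ → Wq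
  | (false, n), (false, m) => (qnum q m - qnum q n) • e (false, n + m)
  | (false, n), (true, m) => (qnum q (m + 1) - qnum q n) • e (true, n + m)
  | (true, n), (false, m) => -((qnum q (n + 1) - qnum q m) • e (true, m + n))
  | (true, _), (true, _) => 0

/-- The bracket of `W^q`, extended bilinearly from the basis. -/
def brkt (q : ℂ) (x y : Wq) : Wq :=
  x.sum fun i a => y.sum fun j b => (a * b) • bb q i j

/-- The twist map `α`: `α(L_n) = (1+qⁿ)L_n`, `α(G_n) = (1+q^{n+1})G_n`,
extended linearly. -/
def alphaW (q : ℂ) (x : Wq) : Wq :=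
  x.sum fun i a => (a * (if i.1 then 1 + q ^ (i.2 + 1) else 1 + q ^ i.2)) • e i

lemma brkt_single (q : ℂ) (i j : Bool × ℤ) (a b : ℂ) :
    brkt q (Finsupp.single i a) (Finsupp.single j b) = (a * b) • bb q i j := by
  unfold brkt
  rw [Finsupp.sum_single_index, Finsupp.sum_single_index]
  · simp
  · simp [Finsupp.sum_single_index]

lemma smul_e (c : ℂ) (i : Bool × ℤ) : c • e i = Finsupp.single i c := by
  simp [e, Finsupp.smul_single]

lemma brkt_smul (q : ℂ) (c d : ℂ) (i j : Bool × ℤ) :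
    brkt q (c • e i) (d • e j) = (c * d) • bb q i j := by
  rw [smul_e, smul_e, brkt_single]

lemma brkt_zero_right (q : ℂ) (x : Wq) : brkt q x 0 = 0 := by
  simp [brkt]

lemma alphaW_e (q : ℂ) (i : Bool × ℤ) :
    alphaW q (e i) = (if i.1 then 1 + q ^ (i.2 + 1) else 1 + q ^ i.2) • e i := by
  unfold alphaW e
  rw [Finsupp.sum_single_index] <;> simp

lemma e_comm (b : Bool) (x y : ℤ) : e (b, x + y) = e (b, y + x) := by rw [add_comm]

lemma e_lcomm (b : Bool) (x y z : ℤ) : e (b, x + (y + z)) = e (b, y + (x + z)) := by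
  rw [add_left_comm]

lemma e_assoc (b : Bool) (x y z : ℤ) : e (b, x + y + z) = e (b, x + (y + z)) := by
  rw [add_assoc]

lemma e_comm2 (b : Bool) (x y z : ℤ) : e (b, x + (y + z)) = e (b, x + (z + y)) := by
  rw [add_comm y z]

lemma brkt_e_e (q : ℂ) (i j : Bool × ℤ) : brkt q (e i) (e j) = bb q i j := by
  have := brkt_single q i j 1 1
  simpa [e] using this

/-- The triple `(W^q, [·,·], α)` is a Hom-Lie superalgebra: on homogeneous (basis)
elements the bracket is super skew-symmetric and satisfies the super Hom-Jacobi
identity `(-1)^{|x||z|}[α(x),[y,z]] + (-1)^{|z||y|}[α(z),[x,y]]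
+ (-1)^{|y||x|}[α(y),[z,x]] = 0`. -/
theorem Wq_is_HomLie_superalgebra (q : ℂ) (hq0 : q ≠ 0) (hq1 : q ≠ 1) :
    (∀ i j : Bool × ℤ, brkt q (e i) (e j) = -(sg i.1 j.1 • brkt q (e j) (e i))) ∧
      (∀ i j k : Bool × ℤ,
        sg i.1 k.1 • brkt q (alphaW q (e i)) (brkt q (e j) (e k))
          + sg k.1 j.1 • brkt q (alphaW q (e k)) (brkt q (e i) (e j))
          + sg j.1 i.1 • brkt q (alphaW q (e j)) (brkt q (e k) (e i)) = 0) := by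
  constructor
  · rintro ⟨bi, n⟩ ⟨bj, m⟩
    cases bi <;> cases bj <;>
      simp only [brkt_e_e, bb, sg, Bool.and_self, Bool.and_false, Bool.false_and,
        Bool.and_true, Bool.true_and, Bool.false_eq_true, reduceIte, ← neg_smul,
        smul_smul, smul_zero, one_smul, neg_zero, e_comm, e_lcomm, e_comm2, e_assoc] <;>
      try module
  · rintro ⟨bi, n⟩ ⟨bj, m⟩ ⟨bk, k⟩
    cases bi <;> cases bj <;> cases bk <;>
      simp only [alphaW_e, brkt_e_e, bb, sg, Bool.and_self, Bool.and_false, Bool.false_and,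
        Bool.and_true, Bool.true_and, Bool.false_eq_true, reduceIte, ← neg_smul, brkt_smul,
        brkt_zero_right, smul_smul, smul_zero, mul_zero, zero_smul, one_smul, neg_zero,
        add_zero, zero_add, e_comm, e_lcomm, e_comm2, e_assoc] <;>
      try (simp only [qnum, zpow_add₀ hq0]; module)

end
end

section
/- For a Hom-Lie superalgebra (G, [·,·], α), the adjoint coboundary operators satisfy δ² ∘ δ¹ = 0: if f is a homogeneous 1-cochain and δ¹(f)(x,y) = -f([x,y]) + (-1)^{|x||f|}[x,f(y)] - (-1)^{|y|(|f|+|x|)}[y,f(x)], then applying the 2-coboundary formula δ²(g)(x,y,z) = -g([x,y],α(z)) + (-1)^{|z||y|}g([x,z],α(y)) + g(α(x),[y,z]) + (-1)^{|x||g|}[α(x),g(y,z)] - (-1)^{|y|(|g|+|x|)}[α(y),g(x,z)] + (-1)^{|z|(|g|+|x|+|y|)}[α(z),g(x,y)] to g = δ¹(f) gives zero, provided f commutes with α (f∘α = α∘f). -/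
noncomputable section

variable {M : Type*} [AddCommGroup M] [Module ℂ M]

/-- The adjoint 1-coboundary of a 1-cochain `f` of parity `pf`, on arguments of
parities `i, j`:
`δ¹(f)(x,y) = -f([x,y]) + (-1)^{|x||f|}[x,f(y)] - (-1)^{|y|(|f|+|x|)}[y,f(x)]`. -/
def D1abs (br : M →ₗ[ℂ] M →ₗ[ℂ] M) (pf : Bool) (f : M →ₗ[ℂ] M)
    (i j : Bool) (x y : M) : M :=
  -f (br x y) + sg i pf • br x (f y) - sg j (xor pf i) • br y (f x)

set_option maxHeartbeats 4000000 in
/-- For a Hom-Lie superalgebra `(G, [·,·], α)` (with ℤ₂-grading given by the two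
submodules `Wp false`, `Wp true`), and a homogeneous 1-cochain `f` of parity `pf`
commuting with `α`, applying the 2-coboundary formula `δ²` to `g = δ¹(f)` gives
zero on homogeneous elements:  `δ² ∘ δ¹ = 0`. -/
theorem D2_comp_D1_eq_zero
    (Wp : Bool → Submodule ℂ M)
    (br : M →ₗ[ℂ] M →ₗ[ℂ] M) (α : M →ₗ[ℂ] M)
    -- the bracket is even and α is even
    (hbr_even : ∀ (i j : Bool) (x y : M), x ∈ Wp i → y ∈ Wp j → br x y ∈ Wp (xor i j))
    (hα_even : ∀ (i : Bool) (x : M), x ∈ Wp i → α x ∈ Wp i)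
    -- super skew-symmetry on homogeneous elements
    (hskew : ∀ (i j : Bool) (x y : M), x ∈ Wp i → y ∈ Wp j →
      br x y = -(sg i j • br y x))
    -- super Hom-Jacobi identity on homogeneous elements
    (hjac : ∀ (i j k : Bool) (x y z : M), x ∈ Wp i → y ∈ Wp j → z ∈ Wp k →
      sg i k • br (α x) (br y z) + sg k j • br (α z) (br x y)
        + sg j i • br (α y) (br z x) = 0)
    -- f is a homogeneous 1-cochain of parity pf, compatible with α
    (pf : Bool) (f : M →ₗ[ℂ] M)
    (hf_par : ∀ (i : Bool) (x : M), x ∈ Wp i → f x ∈ Wp (xor pf i))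
    (hfα : ∀ x : M, f (α x) = α (f x)) :
    ∀ (i j k : Bool) (x y z : M), x ∈ Wp i → y ∈ Wp j → z ∈ Wp k →
      -- δ²(δ¹(f))(x,y,z), with δ¹(f) of the same parity pf:
      -(D1abs br pf f (xor i j) k (br x y) (α z))
        + sg k j • D1abs br pf f (xor i k) j (br x z) (α y)
        + D1abs br pf f i (xor j k) (α x) (br y z)
        + sg i pf • br (α x) (D1abs br pf f j k y z)
        - sg j (xor pf i) • br (α y) (D1abs br pf f i k x z)
        + sg k (xor pf (xor i j)) • br (α z) (D1abs br pf f i j x y) = 0 := by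
  intro i j k x y z hx hy hz
  have H1 : sg i k • f (br (α x) (br y z)) + sg k j • f (br (α z) (br x y))
      + sg j i • f (br (α y) (br z x)) = 0 := by
    have h := congrArg f (hjac i j k x y z hx hy hz)
    simpa using h
  have H2 := hjac (xor pf i) j k (f x) y z (hf_par i x hx) hy hz
  have H3 := hjac i (xor pf j) k x (f y) z hx (hf_par j y hy) hz
  have H4 := hjac i j (xor pf k) x y (f z) hx hy (hf_par k z hz)
  have H5 : f (br (br x y) (α z)) + sg (xor i j) k • f (br (α z) (br x y)) = 0 := by
    rw [hskew (xor i j) k (br x y) (α z) (hbr_even i j x y hx hy) (hα_even k z hz)]; simp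
  have H6 : f (br (br x z) (α y)) + sg (xor i k) j • f (br (α y) (br x z)) = 0 := by
    rw [hskew (xor i k) j (br x z) (α y) (hbr_even i k x z hx hz) (hα_even j y hy)]; simp
  have H7 : f (br (α y) (br z x)) + sg k i • f (br (α y) (br x z)) = 0 := by
    rw [hskew k i z x hz hx]; simp
  have H8 : br (br x y) (α (f z)) + sg (xor i j) (xor pf k) • br (α (f z)) (br x y) = 0 := by
    rw [hskew (xor i j) (xor pf k) (br x y) (α (f z)) (hbr_even i j x y hx hy)
      (hα_even (xor pf k) (f z) (hf_par k z hz))]; simp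
  have H9 : br (br x z) (α (f y)) + sg (xor i k) (xor pf j) • br (α (f y)) (br x z) = 0 := by
    rw [hskew (xor i k) (xor pf j) (br x z) (α (f y)) (hbr_even i k x z hx hz)
      (hα_even (xor pf j) (f y) (hf_par j y hy))]; simp
  have H10 : br (br y z) (α (f x)) + sg (xor j k) (xor pf i) • br (α (f x)) (br y z) = 0 := by
    rw [hskew (xor j k) (xor pf i) (br y z) (α (f x)) (hbr_even j k y z hy hz)
      (hα_even (xor pf i) (f x) (hf_par i x hx))]; simp
  have H11 : br (α y) (br (f z) x) + sg (xor pf k) i • br (α y) (br x (f z)) = 0 := by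
    rw [hskew (xor pf k) i (f z) x (hf_par k z hz) hx]; simp
  have H12 : br (α z) (br (f x) y) + sg (xor pf i) j • br (α z) (br y (f x)) = 0 := by
    rw [hskew (xor pf i) j (f x) y (hf_par i x hx) hy]; simp
  have H13 : br (α x) (br (f y) z) + sg (xor pf j) k • br (α x) (br z (f y)) = 0 := by
    rw [hskew (xor pf j) k (f y) z (hf_par j y hy) hz]; simp
  have H14 : br (α (f y)) (br z x) + sg k i • br (α (f y)) (br x z) = 0 := by
    rw [hskew k i z x hz hx]; simp
  simp only [D1abs, hfα, map_add, map_sub, map_neg, map_smul]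
  cases i <;> cases j <;> cases k <;> cases pf
  · simp only [sg, Bool.xor_false, Bool.xor_true, Bool.false_xor, Bool.true_xor,
      Bool.false_and, Bool.true_and, Bool.and_false, Bool.and_true,
      Bool.false_eq_true, Bool.true_eq_false] at H1 H2 H3 H4 H5 H6 H7 H8 H9 H10 H11 H12 H13 H14 ⊢
    norm_num at H1 H2 H3 H4 H5 H6 H7 H8 H9 H10 H11 H12 H13 H14 ⊢
    linear_combination (norm := module) - H1 + H2 + H3 + H4 + H5 - H6 + H7 - H8 + H9 - H10 - H11 - H12 - H13 - H14
  · simp only [sg, Bool.xor_false, Bool.xor_true, Bool.false_xor, Bool.true_xor,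
      Bool.false_and, Bool.true_and, Bool.and_false, Bool.and_true,
      Bool.false_eq_true, Bool.true_eq_false] at H1 H2 H3 H4 H5 H6 H7 H8 H9 H10 H11 H12 H13 H14 ⊢
    norm_num at H1 H2 H3 H4 H5 H6 H7 H8 H9 H10 H11 H12 H13 H14 ⊢
    linear_combination (norm := module) - H1 + H2 + H3 + H4 + H5 - H6 + H7 - H8 + H9 - H10 - H11 - H12 - H13 - H14
  · simp only [sg, Bool.xor_false, Bool.xor_true, Bool.false_xor, Bool.true_xor,
      Bool.false_and, Bool.true_and, Bool.and_false, Bool.and_true,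
      Bool.false_eq_true, Bool.true_eq_false] at H1 H2 H3 H4 H5 H6 H7 H8 H9 H10 H11 H12 H13 H14 ⊢
    norm_num at H1 H2 H3 H4 H5 H6 H7 H8 H9 H10 H11 H12 H13 H14 ⊢
    linear_combination (norm := module) - H1 + H2 + H3 + H4 + H5 - H6 + H7 - H8 + H9 - H10 - H11 - H12 - H13 - H14
  · simp only [sg, Bool.xor_false, Bool.xor_true, Bool.false_xor, Bool.true_xor,
      Bool.false_and, Bool.true_and, Bool.and_false, Bool.and_true,
      Bool.false_eq_true, Bool.true_eq_false] at H1 H2 H3 H4 H5 H6 H7 H8 H9 H10 H11 H12 H13 H14 ⊢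
    norm_num at H1 H2 H3 H4 H5 H6 H7 H8 H9 H10 H11 H12 H13 H14 ⊢
    linear_combination (norm := module) - H1 - H2 + H3 + H4 + H5 - H6 + H7 - H8 - H9 + H10 - H11 + H12 - H13 - H14
  · simp only [sg, Bool.xor_false, Bool.xor_true, Bool.false_xor, Bool.true_xor,
      Bool.false_and, Bool.true_and, Bool.and_false, Bool.and_true,
      Bool.false_eq_true, Bool.true_eq_false] at H1 H2 H3 H4 H5 H6 H7 H8 H9 H10 H11 H12 H13 H14 ⊢
    norm_num at H1 H2 H3 H4 H5 H6 H7 H8 H9 H10 H11 H12 H13 H14 ⊢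
    linear_combination (norm := module) - H1 + H2 + H3 + H4 + H5 - H6 + H7 - H8 + H9 - H10 - H11 - H12 - H13 - H14
  · simp only [sg, Bool.xor_false, Bool.xor_true, Bool.false_xor, Bool.true_xor,
      Bool.false_and, Bool.true_and, Bool.and_false, Bool.and_true,
      Bool.false_eq_true, Bool.true_eq_false] at H1 H2 H3 H4 H5 H6 H7 H8 H9 H10 H11 H12 H13 H14 ⊢
    norm_num at H1 H2 H3 H4 H5 H6 H7 H8 H9 H10 H11 H12 H13 H14 ⊢
    linear_combination (norm := module) - H1 + H2 + H3 - H4 + H5 - H6 + H7 + H8 + H9 + H10 + H11 - H12 - H13 - H14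
  · simp only [sg, Bool.xor_false, Bool.xor_true, Bool.false_xor, Bool.true_xor,
      Bool.false_and, Bool.true_and, Bool.and_false, Bool.and_true,
      Bool.false_eq_true, Bool.true_eq_false] at H1 H2 H3 H4 H5 H6 H7 H8 H9 H10 H11 H12 H13 H14 ⊢
    norm_num at H1 H2 H3 H4 H5 H6 H7 H8 H9 H10 H11 H12 H13 H14 ⊢
    linear_combination (norm := module) - H1 + H2 + H3 + H4 + H5 + H6 + H7 - H8 - H9 - H10 - H11 + H12 - H13 - H14
  · simp only [sg, Bool.xor_false, Bool.xor_true, Bool.false_xor, Bool.true_xor,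
      Bool.false_and, Bool.true_and, Bool.and_false, Bool.and_true,
      Bool.false_eq_true, Bool.true_eq_false] at H1 H2 H3 H4 H5 H6 H7 H8 H9 H10 H11 H12 H13 H14 ⊢
    norm_num at H1 H2 H3 H4 H5 H6 H7 H8 H9 H10 H11 H12 H13 H14 ⊢
    linear_combination (norm := module) - H1 - H2 + H3 - H4 + H5 + H6 + H7 + H8 + H9 - H10 + H11 - H12 - H13 - H14
  · simp only [sg, Bool.xor_false, Bool.xor_true, Bool.false_xor, Bool.true_xor,
      Bool.false_and, Bool.true_and, Bool.and_false, Bool.and_true,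
      Bool.false_eq_true, Bool.true_eq_false] at H1 H2 H3 H4 H5 H6 H7 H8 H9 H10 H11 H12 H13 H14 ⊢
    norm_num at H1 H2 H3 H4 H5 H6 H7 H8 H9 H10 H11 H12 H13 H14 ⊢
    linear_combination (norm := module) - H1 + H2 + H3 + H4 + H5 - H6 + H7 - H8 + H9 - H10 - H11 - H12 - H13 - H14
  · simp only [sg, Bool.xor_false, Bool.xor_true, Bool.false_xor, Bool.true_xor,
      Bool.false_and, Bool.true_and, Bool.and_false, Bool.and_true,
      Bool.false_eq_true, Bool.true_eq_false] at H1 H2 H3 H4 H5 H6 H7 H8 H9 H10 H11 H12 H13 H14 ⊢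
    norm_num at H1 H2 H3 H4 H5 H6 H7 H8 H9 H10 H11 H12 H13 H14 ⊢
    linear_combination (norm := module) - H1 + H2 - H3 + H4 + H5 - H6 + H7 + H8 - H9 - H10 - H11 - H12 + H13 - H14
  · simp only [sg, Bool.xor_false, Bool.xor_true, Bool.false_xor, Bool.true_xor,
      Bool.false_and, Bool.true_and, Bool.and_false, Bool.and_true,
      Bool.false_eq_true, Bool.true_eq_false] at H1 H2 H3 H4 H5 H6 H7 H8 H9 H10 H11 H12 H13 H14 ⊢
    norm_num at H1 H2 H3 H4 H5 H6 H7 H8 H9 H10 H11 H12 H13 H14 ⊢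
    linear_combination (norm := module) H1 - H2 - H3 - H4 + H5 - H6 - H7 - H8 + H9 + H10 + H11 + H12 - H13 + H14
  · simp only [sg, Bool.xor_false, Bool.xor_true, Bool.false_xor, Bool.true_xor,
      Bool.false_and, Bool.true_and, Bool.and_false, Bool.and_true,
      Bool.false_eq_true, Bool.true_eq_false] at H1 H2 H3 H4 H5 H6 H7 H8 H9 H10 H11 H12 H13 H14 ⊢
    norm_num at H1 H2 H3 H4 H5 H6 H7 H8 H9 H10 H11 H12 H13 H14 ⊢
    linear_combination (norm := module) H1 + H2 + H3 - H4 + H5 - H6 - H7 + H8 + H9 - H10 + H11 - H12 + H13 + H14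
  · simp only [sg, Bool.xor_false, Bool.xor_true, Bool.false_xor, Bool.true_xor,
      Bool.false_and, Bool.true_and, Bool.and_false, Bool.and_true,
      Bool.false_eq_true, Bool.true_eq_false] at H1 H2 H3 H4 H5 H6 H7 H8 H9 H10 H11 H12 H13 H14 ⊢
    norm_num at H1 H2 H3 H4 H5 H6 H7 H8 H9 H10 H11 H12 H13 H14 ⊢
    linear_combination (norm := module) - H1 + H2 + H3 + H4 + H5 - H6 - H7 - H8 + H9 + H10 + H11 - H12 - H13 + H14
  · simp only [sg, Bool.xor_false, Bool.xor_true, Bool.false_xor, Bool.true_xor,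
      Bool.false_and, Bool.true_and, Bool.and_false, Bool.and_true,
      Bool.false_eq_true, Bool.true_eq_false] at H1 H2 H3 H4 H5 H6 H7 H8 H9 H10 H11 H12 H13 H14 ⊢
    norm_num at H1 H2 H3 H4 H5 H6 H7 H8 H9 H10 H11 H12 H13 H14 ⊢
    linear_combination (norm := module) - H1 + H2 - H3 - H4 + H5 - H6 - H7 - H8 - H9 - H10 - H11 - H12 + H13 + H14
  · simp only [sg, Bool.xor_false, Bool.xor_true, Bool.false_xor, Bool.true_xor,
      Bool.false_and, Bool.true_and, Bool.and_false, Bool.and_true,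
      Bool.false_eq_true, Bool.true_eq_false] at H1 H2 H3 H4 H5 H6 H7 H8 H9 H10 H11 H12 H13 H14 ⊢
    norm_num at H1 H2 H3 H4 H5 H6 H7 H8 H9 H10 H11 H12 H13 H14 ⊢
    linear_combination (norm := module) H1 - H2 - H3 - H4 + H5 + H6 + H7 - H8 - H9 - H10 - H11 - H12 - H13 - H14
  · simp only [sg, Bool.xor_false, Bool.xor_true, Bool.false_xor, Bool.true_xor,
      Bool.false_and, Bool.true_and, Bool.and_false, Bool.and_true,
      Bool.false_eq_true, Bool.true_eq_false] at H1 H2 H3 H4 H5 H6 H7 H8 H9 H10 H11 H12 H13 H14 ⊢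
    norm_num at H1 H2 H3 H4 H5 H6 H7 H8 H9 H10 H11 H12 H13 H14 ⊢
    linear_combination (norm := module) H1 + H2 + H3 + H4 + H5 + H6 + H7 - H8 - H9 - H10 + H11 + H12 + H13 - H14

end
end

section
/- Let f be an even adjoint 2-cocycle of ℤ-degree s on W^q with f(L_n,L_p) = a_{n,p}L_{n+p+s}. Then the 2-cocycle condition on the triple (L_n, L_m, L_p) is equivalent to: -(1+q^p)({m}-{n})a_{n+m,p} + (1+q^m)({p}-{n})a_{n+p,m} + (1+qⁿ)({p}-{m})a_{n,m+p} + (1+qⁿ)({m+p+s}-{n})a_{m,p} - (1+q^m)({p+n+s}-{m})a_{n,p} + (1+q^p)({n+m+s}-{p})a_{n,m} = 0. -/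
noncomputable section

/-- The adjoint 1-coboundary `δ¹` of a 1-cochain `g` of parity `pf`, evaluated at
basis elements of indices `i, j`:
`δ¹(g)(x,y) = -g([x,y]) + (-1)^{|x||g|}[x,g(y)] - (-1)^{|y|(|g|+|x|)}[y,g(x)]`. -/
def D1 (q : ℂ) (pf : Bool) (g : Wq → Wq) (i j : Bool × ℤ) : Wq :=
  -g (brkt q (e i) (e j)) + sg i.1 pf • brkt q (e i) (g (e j))
    - sg j.1 (xor pf i.1) • brkt q (e j) (g (e i))

/-- The adjoint 2-coboundary `δ²` of a 2-cochain `f` of parity `pf`, evaluated at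
basis elements of indices `i, j, k`:
`δ²(f)(x,y,z) = -f([x,y],α(z)) + (-1)^{|z||y|}f([x,z],α(y)) + f(α(x),[y,z])
 + (-1)^{|x||f|}[α(x),f(y,z)] - (-1)^{|y|(|f|+|x|)}[α(y),f(x,z)]
 + (-1)^{|z|(|f|+|x|+|y|)}[α(z),f(x,y)]`. -/
def D2 (q : ℂ) (pf : Bool) (f : Wq → Wq → Wq) (i j k : Bool × ℤ) : Wq :=
  -f (brkt q (e i) (e j)) (alphaW q (e k))
    + sg k.1 j.1 • f (brkt q (e i) (e k)) (alphaW q (e j))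
    + f (alphaW q (e i)) (brkt q (e j) (e k))
    + sg i.1 pf • brkt q (alphaW q (e i)) (f (e j) (e k))
    - sg j.1 (xor pf i.1) • brkt q (alphaW q (e j)) (f (e i) (e k))
    + sg k.1 (xor pf (xor i.1 j.1)) • brkt q (alphaW q (e k)) (f (e i) (e j))

/-- The homogeneous subspace of parity `p` of `W^q`. -/
def Wpar (p : Bool) : Submodule ℂ Wq :=
  Submodule.span ℂ (Set.range fun n : ℤ => e (p, n))

/-- The even 2-cochain of ℤ-degree `s` on `W^q` with components
`f(L_n,L_p) = a_{n,p}L_{n+p+s}`, `f(L_n,G_p) = b_{n,p}G_{n+p+s}`,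
`f(G_n,G_p) = c_{n,p}L_{n+p+s}`, extended bilinearly. -/
def Feven (q : ℂ) (a b c : ℤ → ℤ → ℂ) (s : ℤ) : Wq → Wq → Wq :=
  fun x y => x.sum fun i u => y.sum fun j v => (u * v) •
    (match i, j with
      | (false, n), (false, p) => a n p • e (false, n + p + s)
      | (false, n), (true, p) => b n p • e (true, n + p + s)
      | (true, n), (false, p) => -(b p n • e (true, n + p + s))
      | (true, n), (true, p) => c n p • e (false, n + p + s))

lemma e_eq (i : Bool × ℤ) : e i = Finsupp.single i 1 := rfl

lemma Feven_LL (q : ℂ) (a b c : ℤ → ℤ → ℂ) (s : ℤ) (u v : ℂ) (n p : ℤ) :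
    Feven q a b c s (Finsupp.single (false, n) u) (Finsupp.single (false, p) v)
      = (u * v * a n p) • e (false, n + p + s) := by
  rw [Feven, Finsupp.sum_single_index, Finsupp.sum_single_index]
  · rw [smul_smul]
  · simp
  · rw [Finsupp.sum_single_index] <;> simp

lemma alphaW_L (q : ℂ) (u : ℂ) (n : ℤ) :
    alphaW q (Finsupp.single (false, n) u)
      = Finsupp.single (false, n) (u * (1 + q ^ n)) := by
  rw [alphaW, Finsupp.sum_single_index]
  · simp [e, Finsupp.smul_single]
  · simp

lemma brkt_LL (q : ℂ) (u v : ℂ) (n m : ℤ) :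
    brkt q (Finsupp.single (false, n) u) (Finsupp.single (false, m) v)
      = Finsupp.single (false, n + m) (u * v * (qnum q m - qnum q n)) := by
  rw [brkt, Finsupp.sum_single_index, Finsupp.sum_single_index]
  · rw [bb, e, smul_smul, Finsupp.smul_single, smul_eq_mul, mul_one]
  · simp
  · rw [Finsupp.sum_single_index] <;> simp

/-- For an even adjoint 2-cochain `f` of ℤ-degree `s` on `W^q` with
`f(L_n,L_p) = a_{n,p}L_{n+p+s}`, the 2-cocycle condition on the triple
`(L_n, L_m, L_p)` is equivalent to the scalar identity
`-(1+q^p)({m}-{n})a_{n+m,p} + (1+q^m)({p}-{n})a_{n+p,m} + (1+qⁿ)({p}-{m})a_{n,m+p}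
 + (1+qⁿ)({m+p+s}-{n})a_{m,p} - (1+q^m)({p+n+s}-{m})a_{n,p}
 + (1+q^p)({n+m+s}-{p})a_{n,m} = 0`. -/
theorem even_cocycle_LLL_iff (q : ℂ) (hq0 : q ≠ 0) (hq1 : q ≠ 1)
    (s : ℤ) (a b c : ℤ → ℤ → ℂ) (ha : ∀ n p, a n p = -a p n)
    (hc : ∀ n p, c n p = c p n) (n m p : ℤ) :
    D2 q false (Feven q a b c s) (false, n) (false, m) (false, p) = 0 ↔
      -(1 + q ^ p) * (qnum q m - qnum q n) * a (n + m) p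
        + (1 + q ^ m) * (qnum q p - qnum q n) * a (n + p) m
        + (1 + q ^ n) * (qnum q p - qnum q m) * a n (m + p)
        + (1 + q ^ n) * (qnum q (m + p + s) - qnum q n) * a m p
        - (1 + q ^ m) * (qnum q (p + n + s) - qnum q m) * a n p
        + (1 + q ^ p) * (qnum q (n + m + s) - qnum q p) * a n m = 0 := by
  have key : D2 q false (Feven q a b c s) (false, n) (false, m) (false, p)
      = Finsupp.single (false, n + m + p + s)
        (-(1 + q ^ p) * (qnum q m - qnum q n) * a (n + m) p
          + (1 + q ^ m) * (qnum q p - qnum q n) * a (n + p) m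
          + (1 + q ^ n) * (qnum q p - qnum q m) * a n (m + p)
          + (1 + q ^ n) * (qnum q (m + p + s) - qnum q n) * a m p
          - (1 + q ^ m) * (qnum q (p + n + s) - qnum q m) * a n p
          + (1 + q ^ p) * (qnum q (n + m + s) - qnum q p) * a n m) := by
    rw [D2]
    simp only [e_eq, brkt_LL, alphaW_L, Feven_LL,
      show sg false false = 1 from rfl, show sg false (false ^^ false) = 1 from rfl,
      show sg false (false ^^ (false ^^ false)) = 1 from rfl, one_smul]
    simp only [e, smul_smul, Finsupp.smul_single, smul_eq_mul, mul_one]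
    simp only [brkt_LL]
    rw [show n + p + m + s = n + m + p + s by ring,
      show n + (m + p) + s = n + m + p + s by ring,
      show n + (m + p + s) = n + m + p + s by ring,
      show m + (n + p + s) = n + m + p + s by ring,
      show p + (n + m + s) = n + m + p + s by ring]
    rw [← Finsupp.single_neg, ← Finsupp.single_add, ← Finsupp.single_add,
      ← Finsupp.single_add, ← Finsupp.single_sub, ← Finsupp.single_add]
    congr 1
    ring
  rw [key, Finsupp.single_eq_zero]

end
end

section
/- Let (G, [·,·], α) be a Hom-Lie superalgebra and [·,·]_t = Σ_{i≥0} tⁱ[·,·]_i a formal deformation with [·,·]_0 = [·,·]. Then the first-order term [·,·]_1 is a 2-cocycle: δ²([·,·]_1) = 0, where δ² is the adjoint coboundary operator. -/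
noncomputable section

/-- Let `(G,[·,·],α)` be a Hom-Lie superalgebra (grading given by submodules
`Wp false`, `Wp true`) and `[·,·]_t = Σ tⁱ[·,·]_i` a formal deformation with
`[·,·]_0 = [·,·]` (each `[·,·]_i` even and super skew-symmetric, satisfying the
deformation equation order by order).  Then the first-order term `[·,·]_1` is a
2-cocycle: `δ²([·,·]_1) = 0` for the adjoint coboundary, on homogeneous
elements. -/
theorem first_order_term_is_cocycle
    {M : Type*} [AddCommGroup M] [Module ℂ M]
    (Wp : Bool → Submodule ℂ M)
    (br : M →ₗ[ℂ] M →ₗ[ℂ] M) (α : M →ₗ[ℂ] M)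
    (hbr_even : ∀ (i j : Bool) (x y : M), x ∈ Wp i → y ∈ Wp j → br x y ∈ Wp (xor i j))
    (hα_even : ∀ (i : Bool) (x : M), x ∈ Wp i → α x ∈ Wp i)
    (hskew : ∀ (i j : Bool) (x y : M), x ∈ Wp i → y ∈ Wp j →
      br x y = -(sg i j • br y x))
    (hjac : ∀ (i j k : Bool) (x y z : M), x ∈ Wp i → y ∈ Wp j → z ∈ Wp k →
      sg i k • br (α x) (br y z) + sg k j • br (α z) (br x y)
        + sg j i • br (α y) (br z x) = 0)
    -- the formal deformation [·,·]_t = Σ tⁱ m i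
    (m : ℕ → (M →ₗ[ℂ] M →ₗ[ℂ] M)) (hm0 : m 0 = br)
    (hm_even : ∀ (l : ℕ) (i j : Bool) (x y : M), x ∈ Wp i → y ∈ Wp j →
      m l x y ∈ Wp (xor i j))
    (hm_skew : ∀ (l : ℕ) (i j : Bool) (x y : M), x ∈ Wp i → y ∈ Wp j →
      m l x y = -(sg i j • m l y x))
    -- the deformation equation, order by order, on homogeneous elements
    (hdef : ∀ (s : ℕ) (i j k : Bool) (x y z : M),
      x ∈ Wp i → y ∈ Wp j → z ∈ Wp k →
      ∑ l ∈ Finset.range (s + 1),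
        (sg i k • m (s - l) (α x) (m l y z)
          + sg j i • m (s - l) (α y) (m l z x)
          + sg k j • m (s - l) (α z) (m l x y)) = 0) :
    -- δ²([·,·]_1) = 0 :
    ∀ (i j k : Bool) (x y z : M), x ∈ Wp i → y ∈ Wp j → z ∈ Wp k →
      -(m 1) (br x y) (α z) + sg k j • (m 1) (br x z) (α y)
        + (m 1) (α x) (br y z)
        + br (α x) ((m 1) y z)
        - sg j i • br (α y) ((m 1) x z)
        + sg k (xor i j) • br (α z) ((m 1) x y) = 0 := by

  intro i j k x y z hx hy hz
  have H := hdef 1 i j k x y z hx hy hz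
  simp only [Finset.sum_range_succ, Finset.range_one, Finset.sum_singleton,
    Nat.sub_zero, Nat.sub_self, hm0] at H
  -- rewrite skew-symmetries
  have h1 : m 1 z x = -(sg k i • m 1 x z) := hm_skew 1 k i z x hz hx
  have h2 : br z x = -(sg k i • br x z) := hskew k i z x hz hx
  have h3 : m 1 (α z) (br x y) = -(sg k (xor i j) • m 1 (br x y) (α z)) :=
    hm_skew 1 k (xor i j) (α z) (br x y) (hα_even k z hz) (hbr_even i j x y hx hy)
  have h4 : m 1 (α y) (br x z) = -(sg j (xor i k) • m 1 (br x z) (α y)) :=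
    hm_skew 1 j (xor i k) (α y) (br x z) (hα_even j y hy) (hbr_even i k x z hx hz)
  rw [h1, h2] at H
  simp only [map_neg, map_smul, smul_neg, smul_smul] at H
  rw [h3, h4] at H
  cases i <;> cases j <;> cases k <;>
    norm_num [sg] at H ⊢ <;>
    first
    | linear_combination (norm := module) H
    | linear_combination (norm := module) (-1 : ℂ) • H


end
end
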